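/- arXiv:2101.04707 — 6 statements merged into one kernel-verified Lean document; each statement's English description precedes it below -/
import Mathlib

section
/- Let (K(a)|K,v) be an extension of valued fields with a ∉ K. Then: (1) if v(a−K) has no largest element, then v(a−K) ⊆ vK; (2) the set v(a−K) ∩ vK is an initial segment of vK; (3) the set v(a−K) \ (v(a−K) ∩ vK) contains at most one element. -/
namespace Statement5

variable {K F : Type*} [Field K] [Field F] [Algebra K F]
variable {Γ : Type*} [LinearOrderedCommGroupWithZero Γ]

/-- The set `v(a−K) = { v(a−c) : c ∈ K }` (multiplicative notation). -/
def valSet (K : Type*) [Field K] [Algebra K F] (v : Valuation F Γ) (a : F) : Set Γ :=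
  Set.range fun c : K ↦ v (a - algebraMap K F c)

/-- The value group `vK` of `(K,v)`, i.e. the set of values of nonzero elements of `K`,
as a subset of `Γ` (multiplicative notation). -/
def valueGroup (K : Type*) [Field K] [Algebra K F] (v : Valuation F Γ) : Set Γ :=
  {γ | ∃ b : K, b ≠ 0 ∧ v (algebraMap K F b) = γ}

/-- Let `(K(a)|K,v)` be an extension of valued fields with `a ∉ K`. Then:
(1) if `v(a−K)` has no largest element, then `v(a−K) ⊆ vK`;
(2) the set `v(a−K) ∩ vK` is an initial segment of `vK`;
(3) the set `v(a−K) \ (v(a−K) ∩ vK)` contains at most one element.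

We use Mathlib's multiplicative notation for valuations, whose order is the *reverse*
of the paper's additive value groups.  Thus "`v(a−K)` has no largest element" reads:
for each `c` there is `c'` with `v(a−c') < v(a−c)`; and "initial segment" (downward
closed additively) reads "upward closed multiplicatively". -/
theorem statement5 (v : Valuation F Γ)
    (a : F) (ha : a ∉ Set.range (algebraMap K F))
    (hgen : IntermediateField.adjoin K {a} = ⊤) :
    -- (1)
    ((∀ c : K, ∃ c' : K, v (a - algebraMap K F c') < v (a - algebraMap K F c)) →
      valSet K v a ⊆ valueGroup K v) ∧
    -- (2)
    (∀ γ ∈ valSet K v a ∩ valueGroup K v, ∀ δ ∈ valueGroup K v, γ < δ →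
      δ ∈ valSet K v a ∩ valueGroup K v) ∧
    -- (3)
    (valSet K v a \ (valSet K v a ∩ valueGroup K v)).Subsingleton := by
  refine ⟨?_, ?_, ?_⟩
  · intro h γ hγ
    obtain ⟨c, rfl⟩ := hγ
    obtain ⟨c', hc'⟩ := h c
    refine ⟨c - c', ?_, ?_⟩
    · intro h0
      rw [sub_eq_zero] at h0
      subst h0
      exact lt_irrefl _ hc'
    · show v (algebraMap K F (c - c')) = v (a - algebraMap K F c)
      have e : algebraMap K F (c - c') =
          (a - algebraMap K F c') + -(a - algebraMap K F c) := by
        rw [map_sub]; ring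
      rw [e, v.map_add_of_distinct_val (by rw [v.map_neg]; exact hc'.ne),
        v.map_neg, max_eq_right hc'.le]
  · rintro γ ⟨⟨c, rfl⟩, -⟩ δ ⟨b, hb, rfl⟩ hlt
    refine ⟨⟨c - b, ?_⟩, ⟨b, hb, rfl⟩⟩
    show v (a - algebraMap K F (c - b)) = v (algebraMap K F b)
    have e : a - algebraMap K F (c - b) =
        (a - algebraMap K F c) + algebraMap K F b := by
      rw [map_sub]; ring
    rw [e, v.map_add_eq_of_lt_right hlt]
  · rintro γ ⟨⟨c₁, rfl⟩, hγ⟩ δ ⟨⟨c₂, rfl⟩, hδ⟩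
    show v (a - algebraMap K F c₁) = v (a - algebraMap K F c₂)
    by_contra hne'
    have hc : c₁ ≠ c₂ := by rintro rfl; exact hne' rfl
    have hval : v (algebraMap K F (c₂ - c₁)) =
        max (v (a - algebraMap K F c₁)) (v (a - algebraMap K F c₂)) := by
      have e : algebraMap K F (c₂ - c₁) =
          (a - algebraMap K F c₁) + -(a - algebraMap K F c₂) := by
        rw [map_sub]; ring
      rw [e, v.map_add_of_distinct_val (by rw [v.map_neg]; exact hne'), v.map_neg]
    rcases max_cases (v (a - algebraMap K F c₁)) (v (a - algebraMap K F c₂)) with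
      ⟨hm, -⟩ | ⟨hm, -⟩
    · exact hγ ⟨⟨c₁, rfl⟩, ⟨c₂ - c₁, sub_ne_zero.mpr hc.symm, hval.trans hm⟩⟩
    · exact hδ ⟨⟨c₂, rfl⟩, ⟨c₂ - c₁, sub_ne_zero.mpr hc.symm, hval.trans hm⟩⟩


end Statement5
end

section
/- Let (K(a)|K,v) be an extension of valued fields with a ∉ K. Suppose α ∈ v(a−K) and d ∈ K satisfy α + vd > v(a−c) for all c ∈ K. Then vd > 0, and the sets v(a−K) − n·vd = { γ − n·vd : γ ∈ v(a−K) }, for n ∈ ℕ, are pairwise distinct subsets of vK(a). -/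
/-- Let `(K(a)|K,v)` be an extension of valued fields with `a ∉ K`.
Suppose `α ∈ v(a−K)` and `d ∈ K` satisfy `α + vd > v(a−c)` for all `c ∈ K`.  Then
`vd > 0`, and the sets `v(a−K) − n·vd`, `n ∈ ℕ`, are pairwise distinct.

We use Mathlib's multiplicative notation for valuations (order reversed with respect to the
paper's additive value groups): the hypothesis reads `α * v d < v (a - c)` for all `c`,
the first conclusion reads `v d < 1`, and the translated sets are
`{ γ / (v d)^n : γ ∈ v(a−K) }`.  Since `vd` is to be an element of the value group `vK`,
we require `d ≠ 0`. -/
theorem statement7 {K F : Type*} [Field K] [Field F] [Algebra K F]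
    {Γ : Type*} [LinearOrderedCommGroupWithZero Γ] (v : Valuation F Γ)
    (a : F) (ha : a ∉ Set.range (algebraMap K F))
    (hgen : IntermediateField.adjoin K {a} = ⊤)
    (α : Γ) (hα : α ∈ Set.range fun c : K ↦ v (a - algebraMap K F c))
    (d : K) (hd0 : d ≠ 0)
    (hd : ∀ c : K, α * v (algebraMap K F d) < v (a - algebraMap K F c)) :
    v (algebraMap K F d) < 1 ∧
    Function.Injective (fun n : ℕ ↦
      (fun γ : Γ ↦ γ / v (algebraMap K F d) ^ n) ''
        (Set.range fun c : K ↦ v (a - algebraMap K F c))) := by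
  obtain ⟨c₀, hc₀⟩ := hα
  set D := v (algebraMap K F d) with hD
  have hα0 : α ≠ 0 := by
    rw [← hc₀, Ne, Valuation.zero_iff, sub_eq_zero]
    rintro rfl
    exact ha ⟨c₀, rfl⟩
  have hD0 : D ≠ 0 := by
    rw [hD, Ne, Valuation.zero_iff]
    intro h
    exact hd0 ((map_eq_zero (algebraMap K F)).mp h)
  have hlt : D < 1 := by
    have h := hd c₀
    rw [show v (a - algebraMap K F c₀) = α from hc₀] at h
    by_contra hc
    push_neg at hc
    exact absurd h (not_lt.mpr (le_mul_of_one_le_right' hc))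
  refine ⟨hlt, ?_⟩
  have key : ∀ m n : ℕ, m < n →
      (fun γ : Γ ↦ γ / D ^ m) '' (Set.range fun c : K ↦ v (a - algebraMap K F c)) ≠
      (fun γ : Γ ↦ γ / D ^ n) '' (Set.range fun c : K ↦ v (a - algebraMap K F c)) := by
    intro m n hmn heq
    have hmem : α / D ^ m ∈
        (fun γ : Γ ↦ γ / D ^ m) '' (Set.range fun c : K ↦ v (a - algebraMap K F c)) :=
      ⟨α, ⟨c₀, hc₀⟩, rfl⟩
    rw [heq] at hmem
    obtain ⟨β, ⟨c, hc⟩, hβ⟩ := hmem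
    have hpm : D ^ m ≠ 0 := pow_ne_zero _ hD0
    have hpn : D ^ n ≠ 0 := pow_ne_zero _ hD0
    have hβval : β = α * D ^ (n - m) := by
      have h1 : β * D ^ m = α * D ^ n := (div_eq_div_iff hpn hpm).mp hβ
      have h2 : D ^ n = D ^ (n - m) * D ^ m := by
        rw [← pow_add, Nat.sub_add_cancel hmn.le]
      rw [h2, ← mul_assoc] at h1
      exact mul_right_cancel₀ hpm h1
    have hle : α * D ^ (n - m) ≤ α * D := by
      apply mul_le_mul_right
      calc D ^ (n - m) = D ^ (n - m - 1) * D := by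
            rw [← pow_succ, Nat.sub_add_cancel (Nat.one_le_iff_ne_zero.mpr
              (Nat.sub_ne_zero_of_lt hmn))]
        _ ≤ 1 * D := mul_le_mul_left (pow_le_one₀ (zero_le') hlt.le) D
        _ = D := one_mul D
    have := hd c
    rw [show v (a - algebraMap K F c) = β from hc, hβval] at this
    exact absurd this (not_lt.mpr hle)
  intro m n hmn
  by_contra h
  rcases lt_or_gt_of_ne h with h' | h'
  · exact key m n h' hmn
  · exact key n m h' hmn.symm
end

section
/- Let (L|K,v) be an Artin-Schreier extension of valued fields of characteristic p > 0. Then the set v(θ−K) = { v(θ−c) : c ∈ K } is the same for every choice of Artin-Schreier generator θ of L|K; it is an invariant of the extension. -/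
/-!
Two Artin–Schreier generators differ by an affine change `θ' = j * θ + c` with `c ∈ K` and `j` a
nonzero element of the prime field. The extension is Galois, as `X ^ p - X - (θ ^ p - θ)` is
separable with roots `θ + i`, `i ∈ 𝔽_p`. A `K`-automorphism `τ` moves an Artin–Schreier generator
by `τ θ - θ`, a root of `X ^ p - X`, hence an element of the prime field; so any `σ` moving `θ`
generates the Galois group, and `θ' - ((σ θ' - θ') / (σ θ - θ)) * θ` is fixed by it. As a root of
unity, `j` has valuation `1`, so `d ↦ j * d + c` carries `v(θ - K)` onto `v(θ' - K)`.
-/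

open Polynomial IntermediateField

def IsArtinSchreierGenerator (K : Type*) {L : Type*} [Field K] [Field L] [Algebra K L]
    (p : ℕ) (θ : L) : Prop :=
  K⟮θ⟯ = ⊤ ∧ θ ^ p - θ ∈ Set.range (algebraMap K L)

theorem Polynomial.X_pow_sub_X_comp_X_sub_C {R : Type*} [CommRing R] (p : ℕ) [Fact p.Prime]
    [CharP R p] (a : R) : (X ^ p - X : R[X]).comp (X - C a) = X ^ p - X - C (a ^ p - a) := by
  rw [sub_comp, pow_comp, X_comp, sub_pow_char, C_sub, C_pow]
  ring

theorem Polynomial.separable_X_pow_sub_X_sub_C {F : Type*} [Field F] (p : ℕ) [CharP F p] (b : F) :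
    (X ^ p - X - C b : F[X]).Separable := by
  have hderiv : derivative (X ^ p - X - C b : F[X]) = -1 := by simp [derivative_X_pow]
  rw [Polynomial.Separable, hderiv]
  exact isCoprime_one_right.neg_right

section

variable {K L : Type*} [Field K] [Field L] [Algebra K L] {p : ℕ} [Fact p.Prime]

theorem Subfield.exists_natCast_eq_of_mem_bot [CharP L p] {a : L} (ha : a ∈ (⊥ : Subfield L)) :
    ∃ n : ℕ, (n : L) = a := by
  rw [← ZMod.fieldRange_castHom_eq_bot p] at ha
  obtain ⟨i, rfl⟩ := ha
  exact ⟨i.val, by simp⟩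

theorem AlgEquiv.apply_eq_self_of_mem_bot {a : L} (ha : a ∈ (⊥ : Subfield L))
    (τ : L ≃ₐ[K] L) : τ a = a := by
  obtain ⟨k, rfl⟩ : a ∈ (algebraMap K L).fieldRange :=
    (bot_le : ⊥ ≤ (algebraMap K L).fieldRange) ha
  exact τ.commutes k

theorem AlgEquiv.apply_sub_self_mem_bot [CharP L p] {x : L}
    (hx : x ^ p - x ∈ Set.range (algebraMap K L)) (τ : L ≃ₐ[K] L) :
    τ x - x ∈ (⊥ : Subfield L) := by
  obtain ⟨b, hb⟩ := hx
  have hτ : τ x ^ p - τ x = x ^ p - x := by rw [← map_pow, ← map_sub, ← hb, τ.commutes]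
  rw [Subfield.mem_bot_iff_pow_eq_self L p, sub_pow_char]
  linear_combination hτ

theorem AlgEquiv.pow_apply_eq_add_nsmul {σ : L ≃ₐ[K] L} {x a : L} (hσx : σ x = x + a)
    (hσa : σ a = a) (n : ℕ) : (σ ^ n) x = x + n • a := by
  induction n with
  | zero => simp
  | succ n ih =>
    rw [pow_succ', AlgEquiv.mul_apply, ih, map_add, hσx, map_nsmul, hσa, succ_nsmul]
    ring

theorem AlgEquiv.eq_of_apply_eq_of_adjoin_eq_top [Algebra.IsAlgebraic K L] {θ : L}
    (hθ : K⟮θ⟯ = ⊤) {σ τ : L ≃ₐ[K] L} (h : σ θ = τ θ) : σ = τ := by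
  have hadj : Algebra.adjoin K {θ} = ⊤ := by
    rw [← adjoin_simple_toSubalgebra_of_isAlgebraic (Algebra.IsAlgebraic.isAlgebraic θ), hθ,
      top_toSubalgebra]
  exact AlgEquiv.coe_toAlgHom_injective (AlgHom.ext_of_adjoin_eq_top hadj (by simpa using h))

namespace IsArtinSchreierGenerator

theorem isSplittingField [CharP K p] [CharP L p] {θ : L} (hθ : IsArtinSchreierGenerator K p θ)
    {b : K} (hb : algebraMap K L b = θ ^ p - θ) : IsSplittingField K L (X ^ p - X - C b) := by
  rw [isSplittingField_iff_intermediateField]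
  have hmap : (X ^ p - X - C b).map (algebraMap K L) = (X ^ p - X : L[X]).comp (X - C θ) := by
    rw [X_pow_sub_X_comp_X_sub_C, Polynomial.map_sub, Polynomial.map_sub, Polynomial.map_pow,
      map_X, map_C, hb]
  refine ⟨?_, ?_⟩
  · rw [hmap]
    simpa using ((Subfield.splits_bot L p).map (Subfield.subtype ⊥)).comp_X_sub_C θ
  · have hroot : θ ∈ (X ^ p - X - C b).rootSet L := by
      rw [mem_rootSet, aeval_def, eval₂_eq_eval_map, hmap, eval_comp]
      simp [(separable_X_pow_sub_X_sub_C p b).ne_zero, (Fact.out : p.Prime).ne_zero]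
    rw [eq_top_iff, ← hθ.1]
    exact adjoin.mono K _ _ (Set.singleton_subset_iff.mpr hroot)

theorem exists_pow_eq [FiniteDimensional K L] [CharP L p] {θ : L}
    (hθ : IsArtinSchreierGenerator K p θ) {σ : L ≃ₐ[K] L} (hσ : σ θ ≠ θ) (τ : L ≃ₐ[K] L) :
    ∃ n : ℕ, σ ^ n = τ := by
  have ha := σ.apply_sub_self_mem_bot hθ.2
  have ha0 : σ θ - θ ≠ 0 := sub_ne_zero.mpr hσ
  obtain ⟨n, hn⟩ := Subfield.exists_natCast_eq_of_mem_bot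
    (div_mem (τ.apply_sub_self_mem_bot hθ.2) ha)
  refine ⟨n, AlgEquiv.eq_of_apply_eq_of_adjoin_eq_top hθ.1 ?_⟩
  rw [AlgEquiv.pow_apply_eq_add_nsmul (add_sub_cancel θ (σ θ)).symm
    (AlgEquiv.apply_eq_self_of_mem_bot ha σ), nsmul_eq_mul, hn, div_mul_cancel₀ _ ha0,
    add_sub_cancel]

theorem exists_forall_apply_sub_eq_mul [FiniteDimensional K L] [CharP L p] {θ θ' : L}
    (hθ : IsArtinSchreierGenerator K p θ) (hθ' : IsArtinSchreierGenerator K p θ') :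
    ∃ j ∈ (⊥ : Subfield L), j ≠ 0 ∧ ∀ τ : L ≃ₐ[K] L, τ θ' - θ' = j * (τ θ - θ) := by
  by_cases hfix : ∀ σ : L ≃ₐ[K] L, σ θ = θ
  · refine ⟨1, one_mem _, one_ne_zero, fun τ ↦ ?_⟩
    obtain rfl : τ = 1 := AlgEquiv.eq_of_apply_eq_of_adjoin_eq_top hθ.1 (hfix τ)
    simp
  obtain ⟨σ, hσ⟩ := not_forall.mp hfix
  have hσ' : σ θ' ≠ θ' := by
    intro h
    obtain rfl : σ = 1 := AlgEquiv.eq_of_apply_eq_of_adjoin_eq_top hθ'.1 h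
    exact hσ rfl
  have ha := σ.apply_sub_self_mem_bot hθ.2
  have ha' := σ.apply_sub_self_mem_bot hθ'.2
  refine ⟨(σ θ' - θ') / (σ θ - θ), div_mem ha' ha,
    div_ne_zero (sub_ne_zero.mpr hσ') (sub_ne_zero.mpr hσ), fun τ ↦ ?_⟩
  obtain ⟨n, rfl⟩ := hθ.exists_pow_eq hσ τ
  rw [AlgEquiv.pow_apply_eq_add_nsmul (add_sub_cancel θ (σ θ)).symm
      (AlgEquiv.apply_eq_self_of_mem_bot ha σ),
    AlgEquiv.pow_apply_eq_add_nsmul (add_sub_cancel θ' (σ θ')).symm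
      (AlgEquiv.apply_eq_self_of_mem_bot ha' σ)]
  field_simp [sub_ne_zero.mpr hσ]
  ring

theorem exists_eq_mul_add [CharP K p] [CharP L p] {θ θ' : L}
    (hθ : IsArtinSchreierGenerator K p θ) (hθ' : IsArtinSchreierGenerator K p θ') :
    ∃ j ∈ (⊥ : Subfield L), j ≠ 0 ∧ ∃ c : K, θ' = j * θ + algebraMap K L c := by
  obtain ⟨b, hb⟩ := hθ.2
  have := hθ.isSplittingField hb
  have := IsSplittingField.finiteDimensional L (X ^ p - X - C b)
  have := IsGalois.of_separable_splitting_field (E := L) (separable_X_pow_sub_X_sub_C p b)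
  obtain ⟨j, hj, hj0, hshift⟩ := hθ.exists_forall_apply_sub_eq_mul hθ'
  refine ⟨j, hj, hj0, ?_⟩
  obtain ⟨c, hc⟩ := (IsGalois.mem_range_algebraMap_iff_fixed (F := K) (θ' - j * θ)).mpr fun τ ↦ by
    rw [map_sub, map_mul, AlgEquiv.apply_eq_self_of_mem_bot hj]
    linear_combination hshift τ
  exact ⟨c, by rw [hc]; ring⟩

end IsArtinSchreierGenerator

section Valuation

variable {Γ : Type*} [LinearOrderedCommGroupWithZero Γ] (v : Valuation L Γ)

theorem Valuation.map_eq_one_of_mem_bot [CharP L p] {j : L} (hj : j ∈ (⊥ : Subfield L))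
    (hj0 : j ≠ 0) : v j = 1 := by
  have hp1 : p - 1 ≠ 0 := Nat.sub_ne_zero_of_lt (Fact.out : p.Prime).one_lt
  have hpow : j ^ (p - 1) = 1 := by
    refine mul_right_cancel₀ hj0 ?_
    rw [← pow_succ, Nat.sub_add_cancel (Fact.out : p.Prime).one_le, one_mul,
      ← Subfield.mem_bot_iff_pow_eq_self L p]
    exact hj
  rw [← pow_eq_one_iff_of_nonneg zero_le hp1, ← map_pow, hpow, map_one]

theorem Valuation.range_sub_algebraMap_subset_of_eq_mul_add {θ θ' : L} {j : K}
    (hj : v (algebraMap K L j) = 1) {c : K} (h : θ' = algebraMap K L j * θ + algebraMap K L c) :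
    Set.range (fun d : K ↦ v (θ - algebraMap K L d)) ⊆
      Set.range (fun d : K ↦ v (θ' - algebraMap K L d)) := by
  rintro _ ⟨d, rfl⟩
  have hshift : θ' - algebraMap K L (j * d + c) = algebraMap K L j * (θ - algebraMap K L d) := by
    rw [h, map_add, map_mul]
    ring
  exact ⟨j * d + c, by simp only [hshift, v.map_mul, hj, one_mul]⟩

theorem IsArtinSchreierGenerator.range_valuation_sub_algebraMap_subset [CharP K p] [CharP L p]
    {θ θ' : L} (hθ : IsArtinSchreierGenerator K p θ) (hθ' : IsArtinSchreierGenerator K p θ') :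
    Set.range (fun d : K ↦ v (θ - algebraMap K L d)) ⊆
      Set.range (fun d : K ↦ v (θ' - algebraMap K L d)) := by
  obtain ⟨j, hj, hj0, c, h⟩ := hθ.exists_eq_mul_add hθ'
  obtain ⟨k, rfl⟩ : j ∈ (algebraMap K L).fieldRange :=
    (bot_le : ⊥ ≤ (algebraMap K L).fieldRange) hj
  exact v.range_sub_algebraMap_subset_of_eq_mul_add (v.map_eq_one_of_mem_bot hj hj0) h

end Valuation

end

theorem statement12_general {K L : Type*} [Field K] [Field L] [Algebra K L]
    {Γ : Type*} [LinearOrderedCommGroupWithZero Γ] (v : Valuation L Γ)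
    (p : ℕ) [Fact p.Prime] [CharP K p] :
    ∀ θ θ' : L,
      (IntermediateField.adjoin K {θ} = ⊤ ∧ θ ^ p - θ ∈ Set.range (algebraMap K L)) →
      (IntermediateField.adjoin K {θ'} = ⊤ ∧ θ' ^ p - θ' ∈ Set.range (algebraMap K L)) →
      (Set.range fun c : K ↦ v (θ - algebraMap K L c)) =
        (Set.range fun c : K ↦ v (θ' - algebraMap K L c)) := by
  have := charP_of_injective_algebraMap (algebraMap K L).injective p
  intro θ θ' hθ hθ'
  exact (IsArtinSchreierGenerator.range_valuation_sub_algebraMap_subset v hθ hθ').antisymm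
    (IsArtinSchreierGenerator.range_valuation_sub_algebraMap_subset v hθ' hθ)

/-- Let `(L|K,v)` be an Artin-Schreier extension of valued fields of
characteristic `p > 0`.  Then the set `v(θ−K) = { v(θ−c) : c ∈ K }` is the same for every
choice of Artin-Schreier generator `θ` of `L|K` (an element `θ` with `L = K(θ)` and
`θ^p − θ ∈ K`); it is an invariant of the extension.  (Multiplicative notation for `v`.) -/
theorem statement12 {K L : Type*} [Field K] [Field L] [Algebra K L]
    {Γ : Type*} [LinearOrderedCommGroupWithZero Γ] (v : Valuation L Γ)
    (p : ℕ) [Fact p.Prime] [CharP K p]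
    (hASext : ∃ θ₀ : L, IntermediateField.adjoin K {θ₀} = ⊤ ∧
      θ₀ ∉ Set.range (algebraMap K L) ∧ θ₀ ^ p - θ₀ ∈ Set.range (algebraMap K L)) :
    ∀ θ θ' : L,
      (IntermediateField.adjoin K {θ} = ⊤ ∧ θ ^ p - θ ∈ Set.range (algebraMap K L)) →
      (IntermediateField.adjoin K {θ'} = ⊤ ∧ θ' ^ p - θ' ∈ Set.range (algebraMap K L)) →
      (Set.range fun c : K ↦ v (θ - algebraMap K L c)) =
        (Set.range fun c : K ↦ v (θ' - algebraMap K L c)) :=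
  statement12_general v p
end

section
/- Let (F,v) be a valued field of characteristic 0 whose residue field has characteristic p > 0 and which contains a primitive p-th root of unity, and let η, a ∈ F. If v(η−a) < vp/(p−1) + vη (an inequality in the divisible hull of vF), then v(η^p − a^p) = p·v(η−a). -/
/-!
Over a primitive `p`-th root of unity, `η ^ p - a ^ p = ∏_{μ ^ p = 1} (η - μ a)`, so it suffices
that every factor has the value of `η - a`. Since `p` is prime, `p = ∏ (1 - ν)` over the
primitive roots `ν`, and `μ - 1` is `ν - 1` times a geometric sum of value `≤ 1`; hence
`v (μ - 1) ^ (p - 1) ≤ v p`. Writing `η - μ a = (η - a) - a (μ - 1)`, the hypothesis makes the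
correction term `a (μ - 1)` strictly smaller than `η - a` when `v a ≤ v η`; when `v η < v a` both
`η - a` and `η - μ a` simply have the value of `a`.
-/

open Finset Polynomial

theorem Valuation.map_eq_one_of_pow_eq_one {R : Type*} [Ring R] {Γ : Type*}
    [LinearOrderedCommGroupWithZero Γ] (v : Valuation R Γ) {μ : R} {n : ℕ} (hn : n ≠ 0)
    (hμ : μ ^ n = 1) : v μ = 1 :=
  (pow_eq_one_iff_left hn).mp (by rw [← map_pow, hμ, map_one])

namespace IsPrimitiveRoot

variable {R : Type*} [CommRing R] [IsDomain R]

theorem natCast_eq_prod_one_sub_primitiveRoots {p : ℕ} [Fact p.Prime] {ζ : R}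
    (hζ : IsPrimitiveRoot ζ p) : (p : R) = ∏ ν ∈ primitiveRoots p R, (1 - ν) := by
  rw [← eval_one_cyclotomic_prime (R := R), cyclotomic_eq_prod_X_sub_primitiveRoots hζ, eval_prod]
  simp only [eval_sub, eval_X, eval_C]

variable {Γ : Type*} [LinearOrderedCommGroupWithZero Γ] (v : Valuation R Γ)

theorem valuation_sub_one_le {n : ℕ} [NeZero n] {ν μ : R} (hν : IsPrimitiveRoot ν n)
    (hμ : μ ^ n = 1) : v (μ - 1) ≤ v (ν - 1) := by
  obtain ⟨i, -, rfl⟩ := hν.eq_pow_of_pow_eq_one hμ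
  have hgeom : v (∑ k ∈ range i, ν ^ k) ≤ 1 := v.map_sum_le fun k _ ↦ by
    rw [map_pow, v.map_eq_one_of_pow_eq_one (NeZero.ne n) hν.pow_eq_one, one_pow]
  rw [← geom_sum_mul, map_mul]
  exact mul_le_of_le_one_left' hgeom

theorem valuation_sub_one_pow_le {p : ℕ} [hp : Fact p.Prime] {ζ μ : R}
    (hζ : IsPrimitiveRoot ζ p) (hμ : μ ^ p = 1) : v (μ - 1) ^ (p - 1) ≤ v (p : R) := by
  have : NeZero p := ⟨hp.out.ne_zero⟩
  rw [hζ.natCast_eq_prod_one_sub_primitiveRoots, map_prod, ← Nat.totient_prime hp.out,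
    ← hζ.card_primitiveRoots, ← prod_const]
  refine prod_le_prod' fun ν hν ↦ ?_
  rw [v.map_sub_swap 1 ν]
  exact ((mem_primitiveRoots hp.out.pos).mp hν).valuation_sub_one_le v hμ

end IsPrimitiveRoot

namespace Valuation

variable {R : Type*} [CommRing R] {Γ : Type*} [LinearOrderedCommGroupWithZero Γ]
  (v : Valuation R Γ)

theorem map_sub_mul_eq_map_sub {η a μ : R} {c : Γ} {m : ℕ} (hμ : v μ = 1)
    (hμc : v (μ - 1) ^ m ≤ c) (h : c * v η ^ m < v (η - a) ^ m) :
    v (η - μ * a) = v (η - a) := by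
  rcases le_or_gt (v a) (v η) with hle | hlt
  · have hsmall : v (a * (μ - 1)) < v (η - a) := by
      by_contra! hge
      refine h.not_ge ?_
      calc v (η - a) ^ m ≤ v (a * (μ - 1)) ^ m := pow_le_pow_left' hge m
        _ = v (μ - 1) ^ m * v a ^ m := by rw [map_mul, mul_pow, mul_comm]
        _ ≤ c * v η ^ m := mul_le_mul' hμc (pow_le_pow_left' hle m)
    rw [show η - μ * a = (η - a) - a * (μ - 1) by ring, v.map_sub_eq_of_lt_left hsmall]
  · have hμa : v (μ * a) = v a := by rw [map_mul, hμ, one_mul]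
    rw [v.map_sub_eq_of_lt_right (hμa ▸ hlt), v.map_sub_eq_of_lt_right hlt, hμa]

end Valuation

theorem statement14_general {F : Type*} [Field F]
    {Γ : Type*} [LinearOrderedCommGroupWithZero Γ] (v : Valuation F Γ)
    (p : ℕ) (hp : p.Prime)
    (ζ : F) (hζ : IsPrimitiveRoot ζ p)
    (η a : F)
    (h : v ((p : ℕ) : F) * v η ^ (p - 1) < v (η - a) ^ (p - 1)) :
    v (η ^ p - a ^ p) = v (η - a) ^ p := by
  have : Fact p.Prime := ⟨hp⟩
  have hfactor : ∀ μ ∈ nthRootsFinset p (1 : F), v (η - μ * a) = v (η - a) := fun μ hμ ↦ by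
    rw [mem_nthRootsFinset hp.pos] at hμ
    exact v.map_sub_mul_eq_map_sub (v.map_eq_one_of_pow_eq_one hp.ne_zero hμ)
      (hζ.valuation_sub_one_pow_le v hμ) h
  rw [hζ.pow_sub_pow_eq_prod_sub_mul η a hp.pos, map_prod, prod_congr rfl hfactor, prod_const,
    hζ.card_nthRootsFinset]

/-- Let `(F,v)` be a valued field of characteristic `0` whose residue
field has characteristic `p > 0` (rendered as: `p` prime and `v p < 1`) and which contains
a primitive `p`-th root of unity, and let `η, a ∈ F`.  If `v(η−a) < vp/(p−1) + vη`
(an inequality in the divisible hull of `vF`), then `v(η^p − a^p) = p·v(η−a)`.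

Multiplicative notation (order reversed): after clearing denominators, the hypothesis
reads `v p · (v η)^(p−1) < (v (η−a))^(p−1)`, and the conclusion reads
`v (η^p − a^p) = (v (η−a))^p`. -/
theorem statement14 {F : Type*} [Field F] [CharZero F]
    {Γ : Type*} [LinearOrderedCommGroupWithZero Γ] (v : Valuation F Γ)
    (p : ℕ) (hp : p.Prime) (hres : v ((p : ℕ) : F) < 1)
    (ζ : F) (hζ : IsPrimitiveRoot ζ p)
    (η a : F)
    (h : v ((p : ℕ) : F) * v η ^ (p - 1) < v (η - a) ^ (p - 1)) :
    v (η ^ p - a ^ p) = v (η - a) ^ p :=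
  statement14_general v p hp ζ hζ η a h
end

section
/- Let (K,v) be a valued field of characteristic p > 0. If the perfect hull K^{1/p^∞} of K is not contained in the completion K^c of (K,v), then (K,v) admits a purely inseparable extension K(η)|K of degree p (with η^p ∈ K) such that v(η−K) is bounded above by an element of vK. -/
private lemma statement17_aux {K Ω : Type*} [Field K] [Field Ω] [Algebra K Ω]
    [IsAlgClosure K Ω]
    {Γ : Type*} [LinearOrderedCommGroupWithZero Γ] (v : Valuation Ω Γ)
    (p : ℕ) [Fact p.Prime] [CharP K p] :
    ∀ (n : ℕ) (x : Ω), x ^ p ^ n ∈ Set.range (algebraMap K Ω) →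
      (∃ b : K, b ≠ 0 ∧ ∀ c : K, v (algebraMap K Ω b) ≤ v (x - algebraMap K Ω c)) →
    ∃ η : Ω, η ∉ Set.range (algebraMap K Ω) ∧ η ^ p ∈ Set.range (algebraMap K Ω) ∧
      ∃ b : K, b ≠ 0 ∧ ∀ c : K, v (algebraMap K Ω b) ≤ v (η - algebraMap K Ω c) := by
  have hinj : Function.Injective (algebraMap K Ω) := (algebraMap K Ω).injective
  haveI : CharP Ω p := charP_of_injective_algebraMap hinj p
  intro n
  induction n with
  | zero =>
    rintro x hx ⟨b, hb, hbound⟩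
    rw [pow_zero, pow_one] at hx
    obtain ⟨c, rfl⟩ := hx
    have := hbound c
    simp only [sub_self, Valuation.map_zero, le_zero_iff] at this
    exact absurd (hinj (by simpa using v.zero_iff.mp this)) hb
  | succ n ih =>
    rintro x hx ⟨b, hb, hbound⟩
    have hvb : v (algebraMap K Ω b) ≠ 0 := v.ne_zero_iff.mpr (by
      simpa using fun h => hb (hinj (by simpa using h)))
    by_cases hcase : ∃ b' : K, b' ≠ 0 ∧ ∀ c : K, v (algebraMap K Ω b') ≤ v (x ^ p - algebraMap K Ω c)
    · refine ih (x ^ p) ?_ hcase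
      rw [← pow_mul, ← pow_succ']
      exact hx
    · push_neg at hcase
      obtain ⟨c, hc⟩ := hcase (b ^ p) (pow_ne_zero _ hb)
      haveI : IsAlgClosed Ω := IsAlgClosure.isAlgClosed K
      obtain ⟨y, hyp⟩ := IsAlgClosed.exists_pow_nat_eq (algebraMap K Ω c)
        (Nat.Prime.pos (Fact.out : p.Prime))
      -- v (x - y) < v b
      have hxy : v (x - y) < v (algebraMap K Ω b) := by
        by_contra h
        push_neg at h
        have : v (algebraMap K Ω b) ^ p ≤ v (x - y) ^ p := pow_le_pow_left' h p
        rw [← v.map_pow, ← v.map_pow, sub_pow_char, hyp] at this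
        rw [map_pow] at hc
        exact absurd (le_trans (by rw [v.map_pow]) this) (not_le.mpr hc)
      -- for every d, v (y - d) = v (x - d)
      have key : ∀ d : K, v (y - algebraMap K Ω d) = v (x - algebraMap K Ω d) := by
        intro d
        have h1 : v (y - x) < v (x - algebraMap K Ω d) :=
          lt_of_lt_of_le (by rw [show y - x = -(x - y) by ring, Valuation.map_neg]; exact hxy)
            (hbound d)
        have : y - algebraMap K Ω d = (y - x) + (x - algebraMap K Ω d) := by ring
        rw [this, Valuation.map_add_of_distinct_val v (ne_of_lt h1), max_eq_right (le_of_lt h1)]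
      refine ⟨y, ?_, ⟨c, hyp.symm⟩, b, hb, fun d => by rw [key d]; exact hbound d⟩
      rintro ⟨d, rfl⟩
      have h0 := key d
      rw [sub_self, Valuation.map_zero] at h0
      exact hvb (le_antisymm ((hbound d).trans h0.ge) zero_le')
      
/-- Let `(K,v)` be a valued field of characteristic `p > 0`.  If the
perfect hull `K^{1/p^∞}` of `K` is not contained in the completion `K^c` of `(K,v)`,
then `(K,v)` admits a purely inseparable extension `K(η)|K` of degree `p` (with
`η^p ∈ K`) such that `v(η−K)` is bounded above by an element of `vK`.

All fields are taken inside a fixed algebraic closure `Ω` of `K`, equipped with an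
extension `v` of the valuation; an element `x` of the perfect hull (i.e. `x^{p^n} ∈ K`
for some `n`) fails to lie in the completion `K^c` precisely when `v(x−K)` is bounded
above (additively) by an element of `vK`, which in Mathlib's multiplicative notation
(order reversed) reads: `∃ b ∈ K \ {0}, ∀ c ∈ K, v b ≤ v (x − c)`. -/
theorem statement17 {K Ω : Type*} [Field K] [Field Ω] [Algebra K Ω] [IsAlgClosure K Ω]
    {Γ : Type*} [LinearOrderedCommGroupWithZero Γ] (v : Valuation Ω Γ)
    (p : ℕ) [Fact p.Prime] [CharP K p]
    (hx : ∃ x : Ω, (∃ n : ℕ, x ^ p ^ n ∈ Set.range (algebraMap K Ω)) ∧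
      ∃ b : K, b ≠ 0 ∧ ∀ c : K, v (algebraMap K Ω b) ≤ v (x - algebraMap K Ω c)) :
    ∃ η : Ω, η ∉ Set.range (algebraMap K Ω) ∧ η ^ p ∈ Set.range (algebraMap K Ω) ∧
      ∃ b : K, b ≠ 0 ∧ ∀ c : K, v (algebraMap K Ω b) ≤ v (η - algebraMap K Ω c) := by
  obtain ⟨x, ⟨n, hn⟩, hb⟩ := hx
  exact statement17_aux v p n x hn hb
end

section
/- Let (K,v) be a nontrivially valued field of characteristic p > 0. If the perfect hull K^{1/p^∞} of K is not contained in the completion K^c of (K,v), then K admits infinitely many distinct Artin-Schreier extensions. -/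
/-!
Rescaling the given element of the perfect hull and passing to `p`-th powers yields `z` with
`z ^ p = a ∈ K` and `1 ≤ v (z - c)` for all `c ∈ K`. For `f ∈ K` with `v z < v f`, the element
`a f ^ p = (z f) ^ p` is not of the form `c ^ p - c`: otherwise `s = z f - c` has `s ^ p = -c`
and `v f ≤ v s`, so `v z * v f = v (z f) = v c = v s ^ p ≥ v f ^ p`, contradicting `v z < v f`.
Taking `fₖ = D ^ (k + 1)` with `v z < v D`, the roots `θₖ` of `X ^ p - X - a fₖ ^ p` generate
pairwise distinct Artin–Schreier extensions: by Artin–Schreier theory, `K(θₖ) = K(θₗ)` with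
`k < l` would make `a fₗ ^ p - n a fₖ ^ p = a (fₗ - n fₖ) ^ p` of the form `c ^ p - c` for some
`n ∈ 𝔽ₚ`, while `v (fₗ - n fₖ) = v fₗ > v z`.
-/

/-- An Artin-Schreier extension of `K` inside a fixed algebraic closure `Ω`: an
intermediate field generated over `K` by a root `θ ∉ K` of a polynomial `X^p − X − b`
with `b ∈ K` (such an extension is Galois of degree `p`). -/
def IsArtinSchreierExtension (K Ω : Type*) [Field K] [Field Ω] [Algebra K Ω] (p : ℕ)
    (E : IntermediateField K Ω) : Prop :=
  ∃ θ : Ω, E = IntermediateField.adjoin K {θ} ∧ θ ∉ Set.range (algebraMap K Ω) ∧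
    θ ^ p - θ ∈ Set.range (algebraMap K Ω)

open Polynomial IntermediateField

section PrimeField

variable {p : ℕ} [Fact p.Prime] {F : Type*} [Field F] [CharP F p]

theorem pow_char_eq_self_iff {x : F} : x ^ p = x ↔ ∃ n : ℤ, (n : F) = x := by
  rw [← Subfield.mem_bot_iff_pow_eq_self F p, mem_bot_iff_intCast p]

theorem intCast_pow_char (n : ℤ) : (n : F) ^ p = n :=
  pow_char_eq_self_iff.2 ⟨n, rfl⟩

theorem exists_intCast_eq_sub_of_pow_sub_self_eq {x y : F} (h : x ^ p - x = y ^ p - y) :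
    ∃ n : ℤ, (n : F) = x - y :=
  pow_char_eq_self_iff.1 (by rw [sub_pow_char]; linear_combination h)

end PrimeField

section Polynomial

variable {R : Type*} [CommRing R] [Nontrivial R] {n : ℕ}

theorem monic_X_pow_sub_X_sub_C (hn : 1 < n) (b : R) : (X ^ n - X - C b).Monic := by
  rw [sub_sub]
  exact monic_X_pow_sub (by rw [degree_X_add_C]; exact_mod_cast hn)

theorem natDegree_X_pow_sub_X_sub_C (hn : 1 < n) (b : R) : (X ^ n - X - C b).natDegree = n := by
  rw [sub_sub, natDegree_sub_eq_left_of_natDegree_lt] <;> simp [hn]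

theorem IsAlgClosed.exists_pow_sub_self_eq {Ω : Type*} [Field Ω] [IsAlgClosed Ω] (hn : 1 < n)
    (c : Ω) : ∃ θ : Ω, θ ^ n - θ = c := by
  obtain ⟨θ, hθ⟩ := IsAlgClosed.exists_root (X ^ n - X - C c) (by
    rw [degree_eq_natDegree (monic_X_pow_sub_X_sub_C hn c).ne_zero,
      natDegree_X_pow_sub_X_sub_C hn c]
    exact_mod_cast (zero_lt_one.trans hn).ne')
  exact ⟨θ, by simpa [sub_eq_zero] using hθ⟩

theorem isIntegral_of_pow_sub_self {K Ω : Type*} [Field K] [Ring Ω] [Nontrivial Ω] [Algebra K Ω]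
    {θ : Ω} {b : K} (hn : 1 < n) (hb : θ ^ n - θ = algebraMap K Ω b) : IsIntegral K θ :=
  ⟨_, monic_X_pow_sub_X_sub_C hn b, by simp [hb]⟩

end Polynomial

section ArtinSchreier

variable {p : ℕ} [Fact p.Prime] {K Ω : Type*} [Field K] [Field Ω] [Algebra K Ω] [CharP Ω p]
  {θ : Ω} {b : K}

theorem natDegree_minpoly_of_pow_sub_self [IsAlgClosed Ω] (hθ : θ ∉ Set.range (algebraMap K Ω))
    (hb : θ ^ p - θ = algebraMap K Ω b) : (minpoly K θ).natDegree = p := by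
  have hp := (Fact.out : p.Prime).one_lt
  have hint := isIntegral_of_pow_sub_self hp hb
  have hdvd := minpoly.dvd K θ (p := X ^ p - X - C b) (by simp [hb])
  refine ((natDegree_le_of_dvd hdvd (monic_X_pow_sub_X_sub_C hp b).ne_zero).trans_eq
    (natDegree_X_pow_sub_X_sub_C hp b)).antisymm (not_lt.1 fun hlt => hθ ?_)
  set S := (algebraMap K Ω).fieldRange
  set m := (minpoly K θ).map (algebraMap K Ω)
  have hm : m.Monic := (minpoly.monic hint).map _
  -- the `d` roots of `m` are `θ + n` with `n ∈ 𝔽ₚ`, so their sum is `d θ` modulo `K`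
  have hroots : ∀ r ∈ m.roots, r - θ ∈ S := fun r hr => by
    have hr : aeval r (X ^ p - X - C b) = 0 := by
      obtain ⟨q, hq⟩ := hdvd
      rw [hq, map_mul, aeval_def, ← eval_map, (mem_roots hm.ne_zero).1 hr, zero_mul]
    obtain ⟨n, hn⟩ := exists_intCast_eq_sub_of_pow_sub_self_eq (p := p) (x := r) (y := θ)
      (by rw [hb]; simpa [sub_eq_zero] using hr)
    exact hn ▸ intCast_mem S n
  have hsum : m.roots.sum ∈ S := by
    rw [← neg_neg m.roots.sum, ← (IsAlgClosed.splits m).nextCoeff_eq_neg_sum_roots_of_monic hm,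
      nextCoeff_map (algebraMap K Ω).injective]
    exact neg_mem ⟨_, rfl⟩
  have hcard : Multiset.card m.roots = (minpoly K θ).natDegree := by
    rw [splits_iff_card_roots.1 (IsAlgClosed.splits m),
      natDegree_map_eq_of_injective (algebraMap K Ω).injective]
  have hdθ : ((minpoly K θ).natDegree : Ω) * θ ∈ S := by
    have := sub_mem hsum (multiset_sum_mem _ (fun x hx => by
      obtain ⟨r, hr, rfl⟩ := Multiset.mem_map.1 hx; exact hroots r hr) :
        (m.roots.map (· - θ)).sum ∈ S)
    rwa [Multiset.sum_map_sub, Multiset.map_id', Multiset.map_const', Multiset.sum_replicate,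
      sub_sub_cancel, hcard, nsmul_eq_mul] at this
  have hd0 : ((minpoly K θ).natDegree : Ω) ≠ 0 := by
    rw [Ne, CharP.cast_eq_zero_iff Ω p]
    exact Nat.not_dvd_of_pos_of_lt (minpoly.natDegree_pos hint) hlt
  have := mul_mem (inv_mem (natCast_mem S (minpoly K θ).natDegree)) hdθ
  rw [inv_mul_cancel_left₀ hd0] at this
  exact RingHom.mem_fieldRange.1 this

theorem minpoly_eq_X_pow_sub_X_sub_C [IsAlgClosed Ω] (hθ : θ ∉ Set.range (algebraMap K Ω))
    (hb : θ ^ p - θ = algebraMap K Ω b) : minpoly K θ = X ^ p - X - C b := by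
  have hp := (Fact.out : p.Prime).one_lt
  refine (eq_of_monic_of_dvd_of_natDegree_le (minpoly.monic (isIntegral_of_pow_sub_self hp hb))
    (monic_X_pow_sub_X_sub_C hp b) (minpoly.dvd K θ (by simp [hb])) ?_).symm
  rw [natDegree_X_pow_sub_X_sub_C hp, natDegree_minpoly_of_pow_sub_self hθ hb]

theorem finrank_adjoin_of_pow_sub_self [IsAlgClosed Ω] (hθ : θ ∉ Set.range (algebraMap K Ω))
    (hb : θ ^ p - θ = algebraMap K Ω b) : Module.finrank K K⟮θ⟯ = p := by
  rw [adjoin.finrank (isIntegral_of_pow_sub_self (Fact.out : p.Prime).one_lt hb),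
    natDegree_minpoly_of_pow_sub_self hθ hb]

theorem exists_sub_intCast_mul_eq_pow_sub_self_of_mem_adjoin [IsAlgClosure K Ω] {θ' : Ω}
    {b' : K} (hθ : θ ∉ Set.range (algebraMap K Ω)) (hb : θ ^ p - θ = algebraMap K Ω b)
    (hb' : θ' ^ p - θ' = algebraMap K Ω b') (hθ' : θ' ∈ K⟮θ⟯) :
    ∃ (n : ℤ) (c : K), b' - n * b = c ^ p - c := by
  have := IsAlgClosure.isAlgClosed K (K := Ω)
  obtain ⟨σ, hσ⟩ : ∃ σ : Ω →ₐ[K] Ω, σ θ = θ + 1 :=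
    exists_algHom_of_splits_of_aeval
      (fun s => ⟨(Algebra.IsAlgebraic.isAlgebraic s).isIntegral, IsAlgClosed.splits _⟩)
      (by rw [minpoly_eq_X_pow_sub_X_sub_C hθ hb]; simp [add_pow_char, ← hb])
  obtain ⟨n, hn⟩ := exists_intCast_eq_sub_of_pow_sub_self_eq (p := p) (x := σ θ') (y := θ')
    (by rw [← map_pow, ← map_sub, hb', AlgHom.commutes])
  set η := θ' - n * θ
  have hση : σ η = η := by
    simp only [η, map_sub, map_mul, map_intCast, hσ]
    linear_combination -hn
  have hηb : η ^ p - η = algebraMap K Ω (b' - n * b) := by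
    simp only [η, sub_pow_char, mul_pow, intCast_pow_char, map_sub, map_mul, map_intCast]
    linear_combination hb' - n * hb
  by_contra hne
  have hη : η ∉ Set.range (algebraMap K Ω) := fun ⟨c, hc⟩ =>
    hne ⟨n, c, (algebraMap K Ω).injective (by simp [hc, ← hηb])⟩
  have hle : K⟮η⟯ ≤ K⟮θ⟯ := adjoin_simple_le_iff.2
    (sub_mem hθ' (mul_mem (intCast_mem _ n) (mem_adjoin_simple_self K θ)))
  have := adjoin.finiteDimensional (isIntegral_of_pow_sub_self (Fact.out : p.Prime).one_lt hb)
  have heq : K⟮η⟯ = K⟮θ⟯ := eq_of_le_of_finrank_le hle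
    (by rw [finrank_adjoin_of_pow_sub_self hθ hb, finrank_adjoin_of_pow_sub_self hη hηb])
  -- `σ` fixes the generator `η`, hence all of `K⟮η⟯ = K⟮θ⟯`, but it moves `θ`
  have hfix : σ.comp K⟮η⟯.val = K⟮η⟯.val :=
    adjoin_algHom_ext K fun x hx => by simpa [Set.mem_singleton_iff.1 hx] using hση
  have := DFunLike.congr_fun hfix ⟨θ, heq ▸ mem_adjoin_simple_self K θ⟩
  simp only [AlgHom.comp_apply, val_mk, hσ] at this
  exact one_ne_zero (add_eq_left.1 this)

end ArtinSchreier

namespace Valuation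

variable {R Γ₀ : Type*} [Ring R] [LinearOrderedCommMonoidWithZero Γ₀] (v : Valuation R Γ₀)

theorem map_natCast_le_one (n : ℕ) : v n ≤ 1 := by
  induction n with
  | zero => simp
  | succ n ih => simpa using v.map_add_le ih v.map_one.le

theorem map_intCast_le_one (n : ℤ) : v n ≤ 1 := by
  cases n with
  | ofNat n => simpa using v.map_natCast_le_one n
  | negSucc n => rw [Int.cast_negSucc, v.map_neg]; exact v.map_natCast_le_one (n + 1)

end Valuation

section FarFromBase

variable {K Ω Γ : Type*} [Field K] [Field Ω] [Algebra K Ω] [LinearOrderedCommGroupWithZero Γ]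
  (v : Valuation Ω Γ)

variable (K) in
/-- Up to rescaling by an element of `K`, this says that `x` is not in the completion of `K`. -/
def FarFromBase (x : Ω) : Prop :=
  ∀ c : K, 1 ≤ v (x - algebraMap K Ω c)

variable {v}

theorem FarFromBase.one_le {x : Ω} (hx : FarFromBase K v x) : 1 ≤ v x := by
  simpa using hx 0

theorem FarFromBase.notMem_range {x : Ω} (hx : FarFromBase K v x) :
    x ∉ Set.range (algebraMap K Ω) := by
  rintro ⟨c, rfl⟩
  simpa using hx c

theorem farFromBase_div {x : Ω} {b : K} (hb0 : b ≠ 0)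
    (hb : ∀ c : K, v (algebraMap K Ω b) ≤ v (x - algebraMap K Ω c)) :
    FarFromBase K v (x / algebraMap K Ω b) := by
  intro c
  have hb0' : algebraMap K Ω b ≠ 0 := (_root_.map_ne_zero _).2 hb0
  have : x / algebraMap K Ω b - algebraMap K Ω c =
      (x - algebraMap K Ω (b * c)) / algebraMap K Ω b := by
    rw [map_mul]; field_simp
  rw [this, v.map_div, one_le_div₀ ((v.pos_iff).2 hb0')]
  exact hb _

theorem FarFromBase.exists_valuation_gt {z : Ω} {a u : K} (hz : FarFromBase K v z) {n : ℕ}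
    (hn : n ≠ 0) (ha : algebraMap K Ω a = z ^ n) (hu : 1 < v (algebraMap K Ω u)) :
    ∃ D : K, v z < v (algebraMap K Ω D) := by
  refine ⟨a * u, ?_⟩
  have ha0 : v (algebraMap K Ω a) ≠ 0 := by
    rw [ha, v.map_pow]; exact pow_ne_zero _ (zero_lt_one.trans_le hz.one_le).ne'
  calc v z ≤ v z ^ n := le_self_pow₀ hz.one_le hn
    _ = v (algebraMap K Ω a) := by rw [ha, v.map_pow]
    _ < v (algebraMap K Ω a) * v (algebraMap K Ω u) :=
      lt_mul_of_one_lt_right (zero_lt_iff.2 ha0) hu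
    _ = v (algebraMap K Ω (a * u)) := by rw [map_mul, v.map_mul]

end FarFromBase

section Valued

variable {p : ℕ} [Fact p.Prime] {K Ω Γ : Type*} [Field K] [Field Ω] [Algebra K Ω] [CharP Ω p]
  [LinearOrderedCommGroupWithZero Γ] (v : Valuation Ω Γ)

theorem valuation_eq_pow_of_pow_eq_pow_sub_self {y c : Ω} (h : y ^ p = c ^ p - c)
    (hyc : 1 < v (y - c)) : v y = v (y - c) ^ p := by
  have hvc : v c = v (y - c) ^ p := by
    rw [← v.map_pow, sub_pow_char, h, sub_sub_cancel_left, v.map_neg]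
  calc v y = v (y - c + c) := by rw [sub_add_cancel]
    _ = v c := v.map_add_eq_of_lt_right (hvc ▸ lt_self_pow₀ hyc (Fact.out : p.Prime).one_lt)
    _ = v (y - c) ^ p := hvc

variable {v}

theorem FarFromBase.of_pow_sub_lt_one {x w : Ω} (hx : FarFromBase K v x) {c : K}
    (hc : v (x ^ p - algebraMap K Ω c) < 1) (hw : w ^ p = algebraMap K Ω c) :
    FarFromBase K v w := by
  intro g
  have hxg : 1 ≤ v (x - algebraMap K Ω g) ^ p := one_le_pow₀ (hx g)
  have key : (w - algebraMap K Ω g) ^ p =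
      (x - algebraMap K Ω g) ^ p - (x ^ p - algebraMap K Ω c) := by
    rw [sub_pow_char, sub_pow_char, hw]; ring
  have : v (w - algebraMap K Ω g) ^ p = v (x - algebraMap K Ω g) ^ p := by
    rw [← v.map_pow, key, v.map_sub_eq_of_lt_left (hc.trans_le (by rwa [v.map_pow])), v.map_pow]
  exact le_of_pow_le_pow_left₀ (Fact.out : p.Prime).ne_zero zero_le (by rwa [one_pow, this])

theorem FarFromBase.exists_pow_mem_range [IsAlgClosed Ω] (n : ℕ) {x : Ω}
    (hx : FarFromBase K v x) (hn : x ^ p ^ n ∈ Set.range (algebraMap K Ω)) :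
    ∃ z : Ω, FarFromBase K v z ∧ z ^ p ∈ Set.range (algebraMap K Ω) := by
  induction n generalizing x with
  | zero => exact absurd (by simpa using hn) hx.notMem_range
  | succ n ih =>
    by_cases hxp : FarFromBase K v (x ^ p)
    · exact ih hxp (by rwa [← pow_mul, ← pow_succ'])
    · obtain ⟨c, hc⟩ : ∃ c : K, v (x ^ p - algebraMap K Ω c) < 1 := by
        simpa [FarFromBase] using hxp
      obtain ⟨w, hw⟩ := IsAlgClosed.exists_pow_nat_eq (algebraMap K Ω c) (Fact.out : p.Prime).pos
      exact ⟨w, hx.of_pow_sub_lt_one hc hw, c, hw.symm⟩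

theorem pow_sub_self_ne_of_farFromBase {z : Ω} {a : K} (hz : FarFromBase K v z)
    (ha : algebraMap K Ω a = z ^ p) {f : K} (hf : v z < v (algebraMap K Ω f)) (c : K) :
    c ^ p - c ≠ a * f ^ p := by
  intro h
  set t := v (algebraMap K Ω f)
  have ht : 1 < t := hz.one_le.trans_lt hf
  have hf0 : algebraMap K Ω f ≠ 0 := fun h0 => by simp [t, h0] at ht
  set y := z * algebraMap K Ω f
  have hy : y ^ p = algebraMap K Ω c ^ p - algebraMap K Ω c := by
    simp only [y, mul_pow, ← ha, ← map_pow, ← map_mul, ← map_sub, h]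
  have hyc : t ≤ v (y - algebraMap K Ω c) := by
    have : y - algebraMap K Ω c = algebraMap K Ω f * (z - algebraMap K Ω (c / f)) := by
      rw [map_div₀]; field_simp; ring
    rw [this, v.map_mul]
    exact le_mul_of_one_le_right' (hz _)
  have hvy := valuation_eq_pow_of_pow_eq_pow_sub_self v hy (ht.trans_le hyc)
  have : v y < v y := calc
    v y = v z * t := v.map_mul _ _
    _ < t * t := mul_lt_mul_of_pos_right hf (zero_lt_one.trans ht)
    _ = t ^ 2 := (sq t).symm
    _ ≤ t ^ p := pow_le_pow_right₀ ht.le (Fact.out : p.Prime).two_le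
    _ ≤ v (y - algebraMap K Ω c) ^ p := pow_le_pow_left₀ zero_le hyc p
    _ = v y := hvy.symm
  exact lt_irrefl _ this

theorem notMem_range_of_farFromBase {z θ : Ω} {a : K} (hz : FarFromBase K v z)
    (ha : algebraMap K Ω a = z ^ p) {f : K} (hf : v z < v (algebraMap K Ω f))
    (hθ : θ ^ p - θ = algebraMap K Ω (a * f ^ p)) : θ ∉ Set.range (algebraMap K Ω) := by
  rintro ⟨c, rfl⟩
  exact pow_sub_self_ne_of_farFromBase hz ha hf c
    ((algebraMap K Ω).injective (by rw [← hθ, map_sub, map_pow]))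

theorem adjoin_ne_of_farFromBase [IsAlgClosure K Ω] {z θ θ' : Ω} {a f g : K}
    (hz : FarFromBase K v z) (ha : algebraMap K Ω a = z ^ p) (hf : v z < v (algebraMap K Ω f))
    (hfg : v (algebraMap K Ω f) < v (algebraMap K Ω g))
    (hθ : θ ^ p - θ = algebraMap K Ω (a * f ^ p))
    (hθ' : θ' ^ p - θ' = algebraMap K Ω (a * g ^ p)) :
    K⟮θ⟯ ≠ K⟮θ'⟯ := by
  intro heq
  obtain ⟨n, c, hc⟩ := exists_sub_intCast_mul_eq_pow_sub_self_of_mem_adjoin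
    (notMem_range_of_farFromBase hz ha hf hθ) hθ hθ' (heq ▸ mem_adjoin_simple_self K θ')
  have hvg : v (algebraMap K Ω (g - n * f)) = v (algebraMap K Ω g) := by
    refine (congrArg v (map_sub _ _ _)).trans (v.map_sub_eq_of_lt_left ?_)
    calc v (algebraMap K Ω (n * f)) = v n * v (algebraMap K Ω f) := by
          rw [map_mul, map_intCast, v.map_mul]
      _ ≤ v (algebraMap K Ω f) := mul_le_of_le_one_left' (v.map_intCast_le_one n)
      _ < v (algebraMap K Ω g) := hfg
  refine pow_sub_self_ne_of_farFromBase hz ha (f := g - n * f) (hvg ▸ hf.trans hfg) c ?_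
  rw [← hc]
  apply (algebraMap K Ω).injective
  simp only [map_sub, map_mul, map_pow, map_intCast, sub_pow_char, mul_pow, intCast_pow_char]
  ring

end Valued

/-- Let `(K,v)` be a nontrivially valued field of characteristic
`p > 0`.  If the perfect hull `K^{1/p^∞}` of `K` is not contained in the completion
`K^c` of `(K,v)`, then `K` admits infinitely many distinct Artin-Schreier extensions
(inside a fixed algebraic closure `Ω` of `K`).

`Ω` carries an extension `v` of the valuation; an element `x` of the perfect hull
(i.e. `x^{p^n} ∈ K` for some `n`) fails to lie in the completion `K^c` precisely when
`v(x−K)` is bounded above (additively) by an element of `vK`, which in the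
multiplicative notation (order reversed) reads: `∃ b ∈ K \ {0}, ∀ c ∈ K, v b ≤ v (x − c)`. -/
theorem statement18 {K Ω : Type*} [Field K] [Field Ω] [Algebra K Ω] [IsAlgClosure K Ω]
    {Γ : Type*} [LinearOrderedCommGroupWithZero Γ] (v : Valuation Ω Γ)
    (p : ℕ) [Fact p.Prime] [CharP K p]
    (hnontriv : ∃ x : K, x ≠ 0 ∧ v (algebraMap K Ω x) ≠ 1)
    (hx : ∃ x : Ω, (∃ n : ℕ, x ^ p ^ n ∈ Set.range (algebraMap K Ω)) ∧
      ∃ b : K, b ≠ 0 ∧ ∀ c : K, v (algebraMap K Ω b) ≤ v (x - algebraMap K Ω c)) :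
    {E : IntermediateField K Ω | IsArtinSchreierExtension K Ω p E}.Infinite := by
  have : CharP Ω p := charP_of_injective_algebraMap (algebraMap K Ω).injective p
  have := IsAlgClosure.isAlgClosed K (K := Ω)
  obtain ⟨u, hu⟩ : ∃ u : K, 1 < v (algebraMap K Ω u) := by
    obtain ⟨x, hx0, hx1⟩ := hnontriv
    have : (v.comap (algebraMap K Ω)).IsNontrivial := ⟨x, by simpa using hx0, hx1⟩
    simpa using this.exists_one_lt
  obtain ⟨x, ⟨n, e, he⟩, b, hb0, hb⟩ := hx
  obtain ⟨z, hz, a, ha⟩ := (farFromBase_div hb0 hb).exists_pow_mem_range n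
    ⟨e / b ^ p ^ n, by simp [div_pow, he]⟩
  obtain ⟨D, hD⟩ := hz.exists_valuation_gt (Fact.out : p.Prime).ne_zero ha hu
  have hD1 : 1 < v (algebraMap K Ω D) := hz.one_le.trans_lt hD
  have hmono : StrictMono fun k : ℕ => v (algebraMap K Ω (D ^ (k + 1))) := fun k l hkl => by
    simpa using pow_lt_pow_right₀ hD1 (Nat.succ_lt_succ hkl)
  have hvz (k : ℕ) : v z < v (algebraMap K Ω (D ^ (k + 1))) :=
    hD.trans_le (by simpa using le_self_pow₀ hD1.le k.succ_ne_zero)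
  choose θ hθ using fun k : ℕ => IsAlgClosed.exists_pow_sub_self_eq (Fact.out : p.Prime).one_lt
    (algebraMap K Ω (a * (D ^ (k + 1)) ^ p))
  refine Set.infinite_of_injective_forall_mem (f := fun k => K⟮θ k⟯) (fun k l hkl => ?_)
    fun k => ⟨θ k, rfl, notMem_range_of_farFromBase hz ha (hvz k) (hθ k), _, (hθ k).symm⟩
  by_contra hne
  rcases lt_or_gt_of_ne hne with h | h
  · exact adjoin_ne_of_farFromBase hz ha (hvz k) (hmono h) (hθ k) (hθ l) hkl
  · exact adjoin_ne_of_farFromBase hz ha (hvz l) (hmono h) (hθ l) (hθ k) hkl.symm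
end
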